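/- Let G be a unimodular, locally compact second countable, compactly generated group with compact symmetric generating set S, and let μ be a cohomologically adapted probability measure on G whose support is compact. Suppose the drift l(μ) := inf_{n ≥ 1} (1/n) ∫_G |g|_S dμ^{*n}(g) is strictly positive. Let 1 < q ≤ 2 and d > 0, let E be a real Banach space satisfying the (q,d)-uniform smoothness inequality with duality map, let π : G → O(E) be a strongly continuous isometric linear representation and let b ∈ Z¹(G, π) be a μ-harmonic 1-cocycle. Then there exists a constant C > 0, depending only on μ, q and d, such that for every n ≥ 1: inf{‖b(g)‖ : g ∈ G, |g|_S ≥ n} ≤ C · (∫_G ‖b(g)‖^q dμ(g))^{1/q} · n^{1/q}. -/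

import Mathlib

open Pointwise
open scoped ENNReal

noncomputable section

/-- The word length of `g` with respect to a generating set `S`:
`|g|_S = min {n : g ∈ Sⁿ}`. -/
def wordLength {G : Type*} [Monoid G] (S : Set G) (g : G) : ℕ :=
  sInf {n : ℕ | g ∈ S ^ n}

/-- The `n`-fold convolution power `μ^{*n}` of a measure on a group
(with `μ^{*0} = δ₁`). -/
def convPow {G : Type*} [Monoid G] [MeasurableSpace G]
    (μ : MeasureTheory.Measure G) : ℕ → MeasureTheory.Measure G
  | 0 => MeasureTheory.Measure.dirac 1
  | n + 1 => MeasureTheory.Measure.map (fun q : G × G => q.1 * q.2)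
      ((convPow μ n).prod μ)

/-- A Borel probability measure `μ` on a locally compact compactly generated group `G`
with compact symmetric generating set `S` is cohomologically adapted if it is symmetric,
absolutely continuous with respect to the Haar measure, its support contains `S`, its
density is essentially bounded below by a positive constant on `S`, and it has finite
`p`-moments for all `1 ≤ p < ∞`. -/
structure CohomologicallyAdapted {G : Type*} [Group G] [TopologicalSpace G]
    [IsTopologicalGroup G] [LocallyCompactSpace G] [MeasurableSpace G] [BorelSpace G]
    (S : Set G) (μ : MeasureTheory.Measure G) : Prop where
  isProb : MeasureTheory.IsProbabilityMeasure μ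
  symmetric : MeasureTheory.Measure.map (fun g => g⁻¹) μ = μ
  absCont : μ.AbsolutelyContinuous MeasureTheory.Measure.haar
  suppContains : ∀ g ∈ S, ∀ U : Set G, IsOpen U → g ∈ U → 0 < μ U
  densityBounded : ∃ ε : ℝ≥0∞, 0 < ε ∧
    ∀ᵐ x ∂((MeasureTheory.Measure.haar : MeasureTheory.Measure G).restrict S),
      ε ≤ μ.rnDeriv MeasureTheory.Measure.haar x
  finiteMoments : ∀ p : ℝ, 1 ≤ p →
    MeasureTheory.Integrable (fun g => (wordLength S g : ℝ) ^ p) μ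

open Classical in
/-- `x^{*_p} = ‖x‖^{p−2}·Jx` for `x ≠ 0`, and `0^{*_p} = 0`. -/
def starMap {E : Type*} [NormedAddCommGroup E] [NormedSpace ℝ E]
    (J : E → StrongDual ℝ E) (p : ℝ) (x : E) : StrongDual ℝ E :=
  if x = 0 then 0 else ‖x‖ ^ (p - 2) • J x

/-- `E` satisfies the `(q,d)`-uniform smoothness inequality with duality map `J`:
`J` is continuous, `⟨x, Jx⟩ = ‖x‖²`, `‖Jx‖ = ‖x‖` and
`‖x+y‖^q ≤ ‖x‖^q + q⟨y, x^{*_q}⟩ + d‖y‖^q`. -/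
structure IsSmoothDualityMap {E : Type*} [NormedAddCommGroup E] [NormedSpace ℝ E]
    (q d : ℝ) (J : E → StrongDual ℝ E) : Prop where
  continuous : Continuous J
  pairing : ∀ x : E, J x x = ‖x‖ ^ 2
  norm_eq : ∀ x : E, ‖J x‖ = ‖x‖
  ineq : ∀ x y : E, ‖x + y‖ ^ q ≤ ‖x‖ ^ q + q * starMap J q x y + d * ‖y‖ ^ q

/-!
Write `ℓ` for the drift and `I = ∫ ‖b‖^q dμ`. Averaging the smoothness inequality for
`b (g h) = b g + π g (b h)` over `h ∼ μ` kills the linear term because `b` is `μ`-harmonic, so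
`∫ ‖b‖^q dμ^{*N} ≤ N d I`. On the other side, `∫ |g|_S dμ^{*N} ≥ N ℓ` by definition of the drift,
while subadditivity of `|·|_S` gives `∫ |g|_S² dμ^{*N} ≤ N² ∫ |g|_S² dμ`. For `N ≈ 2n/ℓ` the
Paley–Zygmund inequality then bounds `μ^{*N} {|g|_S ≥ n}` below by a constant `c` independent of
`n`, and Markov's inequality on that event yields `g` with `|g|_S ≥ n` and
`‖b g‖^q ≤ N d I / c ≲ n I`.
-/

open MeasureTheory

section WordLength

variable {G : Type*} [Group G] {S : Set G}

theorem mem_pow_wordLength (hS : ∀ g : G, ∃ n, g ∈ S ^ n) (g : G) : g ∈ S ^ wordLength S g :=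
  Nat.sInf_mem (hS g)

theorem wordLength_mul_le (hS : ∀ g : G, ∃ n, g ∈ S ^ n) (g h : G) :
    wordLength S (g * h) ≤ wordLength S g + wordLength S h :=
  Nat.sInf_le <| by
    rw [Set.mem_ofPred_eq, pow_add]
    exact Set.mul_mem_mul (mem_pow_wordLength hS g) (mem_pow_wordLength hS h)

end WordLength

section ConvPow

variable {G : Type*} [Monoid G] [MeasurableSpace G] {μ : Measure G}

theorem lintegral_convPow_succ_le (f : G → ℝ≥0∞) (n : ℕ) :
    ∫⁻ x, f x ∂convPow μ (n + 1) ≤ ∫⁻ g, ∫⁻ h, f (g * h) ∂μ ∂convPow μ n :=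
  (lintegral_map_le _ _).trans (lintegral_prod_le _)

variable [MeasurableMul₂ G]

instance isProbabilityMeasure_convPow [IsProbabilityMeasure μ] :
    ∀ n, IsProbabilityMeasure (convPow μ n)
  | 0 => by rw [convPow]; infer_instance
  | n + 1 => by
      have := isProbabilityMeasure_convPow n
      rw [convPow]
      exact Measure.isProbabilityMeasure_map measurable_mul.aemeasurable

theorem convPow_one [SFinite μ] : convPow μ 1 = μ := by
  rw [convPow, convPow, Measure.dirac_prod, Measure.map_map measurable_mul measurable_prodMk_left]
  simp [Function.comp_def]

theorem lintegral_convPow_le_of_lintegral_mul_le [IsProbabilityMeasure μ] {Φ : G → ℝ≥0∞}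
    (hΦ : Measurable Φ) {D : ℝ≥0∞} (h : ∀ g, ∫⁻ h, Φ (g * h) ∂μ ≤ Φ g + D) (n : ℕ) :
    ∫⁻ g, Φ g ∂convPow μ n ≤ Φ 1 + n * D := by
  induction n with
  | zero => simp [convPow, lintegral_dirac' _ hΦ]
  | succ n ih =>
    calc ∫⁻ g, Φ g ∂convPow μ (n + 1)
        ≤ ∫⁻ g, (Φ g + D) ∂convPow μ n := (lintegral_convPow_succ_le Φ n).trans (lintegral_mono h)
      _ = ∫⁻ g, Φ g ∂convPow μ n + D := by simp [lintegral_add_right _ measurable_const]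
      _ ≤ Φ 1 + n * D + D := by gcongr
      _ = Φ 1 + (n + 1 : ℕ) * D := by push_cast; ring

-- `(x + y)² ≤ (1 + 1/n) x² + (1 + n) y²`, cleared of denominators
theorem Nat.mul_add_sq_le (n x y : ℕ) :
    n * (x + y) ^ 2 ≤ (n + 1) * x ^ 2 + n * (n + 1) * y ^ 2 := by
  zify
  nlinarith [sq_nonneg ((x : ℤ) - n * y)]

theorem lintegral_sq_convPow_le [IsProbabilityMeasure μ] {f : G → ℕ}
    (hf : ∀ g h, f (g * h) ≤ f g + f h) {n : ℕ} (hn : 1 ≤ n) :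
    ∫⁻ g, (f g : ℝ≥0∞) ^ 2 ∂convPow μ n ≤ n ^ 2 * ∫⁻ g, (f g : ℝ≥0∞) ^ 2 ∂μ := by
  set m := ∫⁻ g, (f g : ℝ≥0∞) ^ 2 ∂μ
  induction n, hn using Nat.le_induction with
  | base => simp [convPow_one, m]
  | succ n hn ih =>
    have hpt : ∀ g h, (n : ℝ≥0∞) * (f (g * h) : ℝ≥0∞) ^ 2
        ≤ (n + 1) * (f g : ℝ≥0∞) ^ 2 + n * (n + 1) * (f h : ℝ≥0∞) ^ 2 := fun g h => by
      exact_mod_cast (Nat.mul_le_mul_left n (Nat.pow_le_pow_left (hf g h) 2)).trans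
        (Nat.mul_add_sq_le n (f g) (f h))
    have hn0 : (n : ℝ≥0∞) ≠ 0 := by exact_mod_cast (show n ≠ 0 by omega)
    refine (ENNReal.mul_le_mul_iff_right hn0 (ENNReal.natCast_ne_top n)).mp ?_
    calc (n : ℝ≥0∞) * ∫⁻ g, (f g : ℝ≥0∞) ^ 2 ∂convPow μ (n + 1)
        = ∫⁻ g, n * (f g : ℝ≥0∞) ^ 2 ∂convPow μ (n + 1) :=
          (lintegral_const_mul' _ _ (ENNReal.natCast_ne_top n)).symm
      _ ≤ ∫⁻ g, ∫⁻ h, ((n + 1) * (f g : ℝ≥0∞) ^ 2 + n * (n + 1) * (f h : ℝ≥0∞) ^ 2) ∂μ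
            ∂convPow μ n :=
          (lintegral_convPow_succ_le _ n).trans
            (lintegral_mono fun g => lintegral_mono fun h => hpt g h)
      _ = (n + 1) * ∫⁻ g, (f g : ℝ≥0∞) ^ 2 ∂convPow μ n + n * (n + 1) * m := by
          simp [lintegral_add_left measurable_const, lintegral_add_right _ measurable_const,
            lintegral_const_mul' _ _ (by finiteness : (n + 1 : ℝ≥0∞) ≠ ⊤),
            lintegral_const_mul' _ _ (by finiteness : (n * (n + 1) : ℝ≥0∞) ≠ ⊤), m]
      _ ≤ (n + 1) * (n ^ 2 * m) + n * (n + 1) * m := by grw [ih]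
      _ = n * ((n + 1 : ℕ) ^ 2 * m) := by push_cast; ring

end ConvPow

section Probability

variable {α : Type*} [MeasurableSpace α] {ν : Measure α}

theorem mul_lintegral_le_add_lintegral_sq [IsProbabilityMeasure ν] {X : α → ℝ≥0∞}
    (hX : AEMeasurable X ν) (t T : ℝ≥0∞) :
    T * ∫⁻ x, X x ∂ν ≤ T * t + ∫⁻ x, X x ^ 2 ∂ν + T ^ 2 * ν {x | t ≤ X x} := by
  have hpt : ∀ x, T * X x ≤ T * t + (X x ^ 2 + {x | t ≤ X x}.indicator (fun _ => T ^ 2) x) := by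
    intro x
    by_cases hx : t ≤ X x
    · rw [Set.indicator_of_mem (show x ∈ {x | t ≤ X x} from hx), sq, sq]
      rcases le_total (X x) T with h | h
      · exact le_add_left (le_add_left (by gcongr))
      · exact le_add_left (le_add_right (by gcongr))
    · exact le_add_right (by gcongr; exact (not_le.mp hx).le)
  calc T * ∫⁻ x, X x ∂ν = ∫⁻ x, T * X x ∂ν := (lintegral_const_mul'' T hX).symm
    _ ≤ ∫⁻ x, (T * t + (X x ^ 2 + {x | t ≤ X x}.indicator (fun _ => T ^ 2) x)) ∂ν :=
        lintegral_mono hpt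
    _ ≤ T * t + ∫⁻ x, X x ^ 2 ∂ν + T ^ 2 * ν {x | t ≤ X x} := by
        rw [lintegral_add_left measurable_const, lintegral_const, measure_univ, mul_one,
          lintegral_add_left' (hX.pow_const 2), ← add_assoc]
        gcongr
        exact lintegral_indicator_const_le _ _

theorem ofReal_sq_div_le_measure_of_lintegral_sq_le [IsProbabilityMeasure ν] {X : α → ℝ≥0∞}
    (hX : AEMeasurable X ν) {a B t : ℝ} (ha : 0 < a) (ht : 0 ≤ t) (hta : 2 * t ≤ a)
    (h1 : ENNReal.ofReal a ≤ ∫⁻ x, X x ∂ν) (h2 : ∫⁻ x, X x ^ 2 ∂ν ≤ ENNReal.ofReal B) :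
    ENNReal.ofReal (a ^ 2 / (16 * B)) ≤ ν {x | ENNReal.ofReal t ≤ X x} := by
  rcases le_or_gt B 0 with hB | hB
  · rw [ENNReal.ofReal_of_nonpos (div_nonpos_of_nonneg_of_nonpos (sq_nonneg a) (by linarith))]
    exact zero_le
  set p := (ν {x | ENNReal.ofReal t ≤ X x}).toReal
  have hp : ν {x | ENNReal.ofReal t ≤ X x} = ENNReal.ofReal p :=
    (ENNReal.ofReal_toReal (measure_ne_top _ _)).symm
  set T := 4 * B / a
  have hT : 0 ≤ T := by positivity
  have key : ENNReal.ofReal (T * a) ≤ ENNReal.ofReal (T * t + B + T ^ 2 * p) := by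
    calc ENNReal.ofReal (T * a) = ENNReal.ofReal T * ENNReal.ofReal a := ENNReal.ofReal_mul hT
      _ ≤ ENNReal.ofReal T * ∫⁻ x, X x ∂ν := by gcongr
      _ ≤ ENNReal.ofReal T * ENNReal.ofReal t + ∫⁻ x, X x ^ 2 ∂ν
            + ENNReal.ofReal T ^ 2 * ν {x | ENNReal.ofReal t ≤ X x} :=
          mul_lintegral_le_add_lintegral_sq hX _ _
      _ ≤ ENNReal.ofReal T * ENNReal.ofReal t + ENNReal.ofReal B
            + ENNReal.ofReal T ^ 2 * ENNReal.ofReal p := by rw [hp]; gcongr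
      _ = ENNReal.ofReal (T * t + B + T ^ 2 * p) := by
          rw [ENNReal.ofReal_add (by positivity) (by positivity),
            ENNReal.ofReal_add (by positivity) hB.le, ENNReal.ofReal_mul hT,
            ENNReal.ofReal_mul (by positivity), ENNReal.ofReal_pow hT]
  have hreal := (ENNReal.ofReal_le_ofReal_iff (by positivity)).mp key
  rw [hp]
  refine ENNReal.ofReal_le_ofReal ?_
  have hTa : T * a = 4 * B := div_mul_cancel₀ _ ha.ne'
  have hTt : T * t ≤ 2 * B := by
    rw [div_mul_eq_mul_div, div_le_iff₀ ha]; nlinarith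
  have hB16 : B * a ^ 2 ≤ 16 * B ^ 2 * p := by
    have : B ≤ T ^ 2 * p := by linarith
    rw [div_pow, div_mul_eq_mul_div, le_div_iff₀ (by positivity)] at this
    linarith
  rw [div_le_iff₀ (by positivity)]
  nlinarith

theorem sInf_image_le_of_lintegral_rpow_le {f : α → ℝ} (hf : AEMeasurable f ν)
    (hf0 : ∀ x, 0 ≤ f x) {q : ℝ} (hq : 0 < q) {A : Set α} {c K : ℝ} (hc : 0 < c) (hK : 0 ≤ K)
    (hA : ENNReal.ofReal c ≤ ν A) (hfK : ∫⁻ x, ENNReal.ofReal (f x ^ q) ∂ν ≤ ENNReal.ofReal K) :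
    sInf (f '' A) ≤ (K / c) ^ (1 / q) := by
  have hA0 : ν A ≠ 0 := (lt_of_lt_of_le (ENNReal.ofReal_pos.mpr hc) hA).ne'
  have hbdd : BddBelow (f '' A) := ⟨0, by rintro _ ⟨x, -, rfl⟩; exact hf0 x⟩
  set s := sInf (f '' A)
  have hs0 : 0 ≤ s :=
    le_csInf ((nonempty_of_measure_ne_zero hA0).image f) (by rintro _ ⟨x, -, rfl⟩; exact hf0 x)
  have hsub : A ⊆ {x | ENNReal.ofReal (s ^ q) ≤ ENNReal.ofReal (f x ^ q)} := fun x hx =>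
    ENNReal.ofReal_le_ofReal (Real.rpow_le_rpow hs0 (csInf_le hbdd ⟨x, hx, rfl⟩) hq.le)
  have hsK : ENNReal.ofReal (s ^ q * c) ≤ ENNReal.ofReal K :=
    calc ENNReal.ofReal (s ^ q * c) = ENNReal.ofReal (s ^ q) * ENNReal.ofReal c :=
          ENNReal.ofReal_mul (by positivity)
      _ ≤ ENNReal.ofReal (s ^ q) * ν {x | ENNReal.ofReal (s ^ q) ≤ ENNReal.ofReal (f x ^ q)} := by
          gcongr; exact hA.trans (measure_mono hsub)
      _ ≤ ∫⁻ x, ENNReal.ofReal (f x ^ q) ∂ν :=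
          mul_meas_ge_le_lintegral₀ (hf.pow_const q).ennreal_ofReal _
      _ ≤ ENNReal.ofReal K := hfK
  have hsqK : s ^ q ≤ K / c := by
    rw [le_div_iff₀ hc]; exact (ENNReal.ofReal_le_ofReal_iff hK).mp hsK
  calc s = (s ^ q) ^ (1 / q) := by
        rw [← Real.rpow_mul hs0, mul_one_div_cancel hq.ne', Real.rpow_one]
    _ ≤ (K / c) ^ (1 / q) := by gcongr

end Probability

theorem IsSmoothDualityMap.lintegral_rpow_norm_add_le {E : Type*} [NormedAddCommGroup E]
    [NormedSpace ℝ E] [CompleteSpace E] {q d : ℝ} {J : E → StrongDual ℝ E}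
    (hJ : IsSmoothDualityMap q d J) {α : Type*} [MeasurableSpace α] {ν : Measure α}
    [IsProbabilityMeasure ν] (x : E) {Y : α → E} (hY : Integrable Y ν) (hY0 : ∫ a, Y a ∂ν = 0)
    (hYq : Integrable (fun a => ‖Y a‖ ^ q) ν) :
    ∫⁻ a, ENNReal.ofReal (‖x + Y a‖ ^ q) ∂ν ≤ ENNReal.ofReal (‖x‖ ^ q + d * ∫ a, ‖Y a‖ ^ q ∂ν) := by
  set φ := starMap J q x
  have hφY : Integrable (fun a => q * φ (Y a)) ν := (φ.integrable_comp hY).const_mul q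
  have hR₁ : Integrable (fun a => ‖x‖ ^ q + q * φ (Y a)) ν := (integrable_const _).add hφY
  have hR : Integrable (fun a => ‖x‖ ^ q + q * φ (Y a) + d * ‖Y a‖ ^ q) ν :=
    hR₁.add (hYq.const_mul d)
  have hpt : ∀ a, ‖x + Y a‖ ^ q ≤ ‖x‖ ^ q + q * φ (Y a) + d * ‖Y a‖ ^ q := fun a => hJ.ineq x (Y a)
  calc ∫⁻ a, ENNReal.ofReal (‖x + Y a‖ ^ q) ∂ν
      ≤ ∫⁻ a, ENNReal.ofReal (‖x‖ ^ q + q * φ (Y a) + d * ‖Y a‖ ^ q) ∂ν :=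
        lintegral_mono fun a => ENNReal.ofReal_le_ofReal (hpt a)
    _ = ENNReal.ofReal (∫ a, (‖x‖ ^ q + q * φ (Y a) + d * ‖Y a‖ ^ q) ∂ν) :=
        (ofReal_integral_eq_lintegral_ofReal hR <| ae_of_all _ fun a =>
          (Real.rpow_nonneg (norm_nonneg _) q).trans (hpt a)).symm
    _ = ENNReal.ofReal (‖x‖ ^ q + d * ∫ a, ‖Y a‖ ^ q ∂ν) := by
        rw [integral_add hR₁ (hYq.const_mul d),
          integral_add (integrable_const _) hφY, integral_const_mul, integral_const_mul,
          φ.integral_comp_comm hY, hY0, map_zero]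
        simp

section Cocycle

variable {G : Type*} [Group G] {E : Type*} [NormedAddCommGroup E] [NormedSpace ℝ E]
  {π : G →* (E ≃ₗᵢ[ℝ] E)} {b : G → E}

theorem cocycle_one (hb : ∀ g h, b (g * h) = b g + π g (b h)) : b 1 = 0 := by
  simpa using hb 1 1

theorem norm_cocycle_le_of_mem_pow (hb : ∀ g h, b (g * h) = b g + π g (b h)) {S : Set G}
    {M : ℝ} (hM : ∀ s ∈ S, ‖b s‖ ≤ M) {n : ℕ} {g : G} (hg : g ∈ S ^ n) : ‖b g‖ ≤ n * M := by
  induction n generalizing g with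
  | zero =>
    rw [pow_zero, Set.mem_one] at hg
    simp [hg, cocycle_one hb]
  | succ n ih =>
    obtain ⟨u, hu, v, hv, rfl⟩ := Set.mem_mul.mp (pow_succ S n ▸ hg)
    calc ‖b (u * v)‖ ≤ ‖b u‖ + ‖π u (b v)‖ := hb u v ▸ norm_add_le _ _
      _ ≤ n * M + M := by rw [LinearIsometryEquiv.norm_map]; exact add_le_add (ih hu) (hM v hv)
      _ = (n + 1 : ℕ) * M := by push_cast; ring

variable [TopologicalSpace G] [MeasurableSpace G] [OpensMeasurableSpace G] {μ : Measure G}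

theorem memLp_cocycle [SecondCountableTopology G] {S : Set G} (hS : IsCompact S)
    (hSgen : ∀ g : G, ∃ n, g ∈ S ^ n) (hbc : Continuous b)
    (hb : ∀ g h, b (g * h) = b g + π g (b h)) {p : ℝ≥0∞}
    (hL : MemLp (fun g => (wordLength S g : ℝ)) p μ) : MemLp b p μ := by
  obtain ⟨M, hM⟩ := hS.exists_bound_of_continuousOn hbc.continuousOn
  refine hL.of_le_mul (c := M) hbc.aestronglyMeasurable (ae_of_all _ fun g => ?_)
  rw [Real.norm_natCast, mul_comm]
  exact norm_cocycle_le_of_mem_pow hb hM (mem_pow_wordLength hSgen g)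

theorem lintegral_rpow_norm_cocycle_convPow_le [CompleteSpace E] [MeasurableMul₂ G]
    [IsProbabilityMeasure μ] {q d : ℝ} {J : E → StrongDual ℝ E} (hJ : IsSmoothDualityMap q d J)
    (hq : 0 < q) (hd : 0 ≤ d) (hbc : Continuous b) (hb : ∀ g h, b (g * h) = b g + π g (b h))
    (hbμ : Integrable b μ) (hb0 : ∫ g, b g ∂μ = 0) (hbq : Integrable (fun g => ‖b g‖ ^ q) μ)
    (n : ℕ) :
    ∫⁻ g, ENNReal.ofReal (‖b g‖ ^ q) ∂convPow μ n
      ≤ ENNReal.ofReal (n * (d * ∫ g, ‖b g‖ ^ q ∂μ)) := by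
  have hstep : ∀ g, ∫⁻ h, ENNReal.ofReal (‖b (g * h)‖ ^ q) ∂μ
      ≤ ENNReal.ofReal (‖b g‖ ^ q) + ENNReal.ofReal (d * ∫ g, ‖b g‖ ^ q ∂μ) := fun g => by
    set πg := (π g).toLinearIsometry.toContinuousLinearMap
    have h := hJ.lintegral_rpow_norm_add_le (b g) (πg.integrable_comp hbμ)
      (by rw [πg.integral_comp_comm hbμ, hb0, map_zero])
      (by simpa [πg, LinearIsometryEquiv.norm_map] using hbq)
    simp only [πg, LinearIsometry.coe_toContinuousLinearMap,
      LinearIsometryEquiv.coe_toLinearIsometry, LinearIsometryEquiv.norm_map] at h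
    simp only [hb g]
    rwa [ENNReal.ofReal_add (by positivity)
      (mul_nonneg hd (integral_nonneg fun _ => by positivity))] at h
  refine (lintegral_convPow_le_of_lintegral_mul_le
    (hbc.norm.rpow_const fun _ => Or.inr hq.le).measurable.ennreal_ofReal hstep n).trans ?_
  rw [cocycle_one hb, norm_zero, Real.zero_rpow hq.ne', ENNReal.ofReal_zero, zero_add,
    ENNReal.ofReal_mul (Nat.cast_nonneg _), ENNReal.ofReal_natCast]

end Cocycle

theorem exists_nat_two_mul_le_mul {ℓ : ℝ} (hℓ : 0 < ℓ) {n : ℕ} (hn : 1 ≤ n) :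
    ∃ N : ℕ, 1 ≤ N ∧ 2 * n ≤ N * ℓ ∧ (N : ℝ) ≤ (2 / ℓ + 1) * n := by
  have hn' : (1 : ℝ) ≤ n := by exact_mod_cast hn
  refine ⟨⌈2 * n / ℓ⌉₊, Nat.ceil_pos.mpr (by positivity),
    (div_le_iff₀ hℓ).mp (Nat.le_ceil _), ?_⟩
  have := Nat.ceil_lt_add_one (show 0 ≤ 2 * (n : ℝ) / ℓ by positivity)
  calc (⌈2 * n / ℓ⌉₊ : ℝ) ≤ 2 * n / ℓ + n := by linarith
    _ = (2 / ℓ + 1) * n := by ring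

section Drift

variable {G : Type*} [Group G] [MeasurableSpace G]

def drift (S : Set G) (μ : Measure G) : ℝ :=
  sInf {x : ℝ | ∃ n : ℕ, 1 ≤ n ∧ x = (1 / (n : ℝ)) * ∫ g, (wordLength S g : ℝ) ∂(convPow μ n)}

variable {S : Set G} {μ : Measure G}

theorem natCast_mul_drift_le_integral (h : 0 < drift S μ) {n : ℕ} (hn : 1 ≤ n) :
    n * drift S μ ≤ ∫ g, (wordLength S g : ℝ) ∂convPow μ n := by
  have hbdd : BddBelow {x : ℝ | ∃ n : ℕ, 1 ≤ n ∧
      x = (1 / (n : ℝ)) * ∫ g, (wordLength S g : ℝ) ∂(convPow μ n)} := by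
    by_contra hb
    rw [drift, Real.sInf_of_not_bddBelow hb] at h
    exact h.false
  have hn0 : (0 : ℝ) < n := by exact_mod_cast hn
  calc n * drift S μ ≤ n * ((1 / n) * ∫ g, (wordLength S g : ℝ) ∂convPow μ n) := by
        gcongr; exact csInf_le hbdd ⟨n, hn, rfl⟩
    _ = ∫ g, (wordLength S g : ℝ) ∂convPow μ n := by field_simp

theorem integrable_wordLength_convPow (h : 0 < drift S μ) {n : ℕ} (hn : 1 ≤ n) :
    Integrable (fun g => (wordLength S g : ℝ)) (convPow μ n) := by
  by_contra hi
  have := natCast_mul_drift_le_integral h hn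
  rw [integral_undef hi] at this
  have : (0 : ℝ) < n * drift S μ := mul_pos (by exact_mod_cast hn) h
  linarith

theorem ofReal_natCast_mul_drift_le_lintegral (h : 0 < drift S μ) {n : ℕ} (hn : 1 ≤ n) :
    ENNReal.ofReal (n * drift S μ) ≤ ∫⁻ g, (wordLength S g : ℝ≥0∞) ∂convPow μ n := by
  simp_rw [← ENNReal.ofReal_natCast (wordLength S _)]
  rw [← ofReal_integral_eq_lintegral_ofReal (integrable_wordLength_convPow h hn)
    (ae_of_all _ fun _ => Nat.cast_nonneg _)]
  exact ENNReal.ofReal_le_ofReal (natCast_mul_drift_le_integral h hn)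

theorem ofReal_drift_sq_div_le_convPow_setOf_le_wordLength [MeasurableMul₂ G]
    [IsProbabilityMeasure μ] (hSgen : ∀ g : G, ∃ n, g ∈ S ^ n) (h : 0 < drift S μ) {B : ℝ}
    (hB : ∫⁻ g, (wordLength S g : ℝ≥0∞) ^ 2 ∂μ ≤ ENNReal.ofReal B) {n N : ℕ} (hN : 1 ≤ N)
    (hnN : 2 * n ≤ N * drift S μ) :
    ENNReal.ofReal (drift S μ ^ 2 / (16 * B)) ≤ convPow μ N {g | n ≤ wordLength S g} := by
  have hX : AEMeasurable (fun g => (wordLength S g : ℝ≥0∞)) (convPow μ N) := by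
    simp_rw [← ENNReal.ofReal_natCast (wordLength S _)]
    exact (integrable_wordLength_convPow h hN).aemeasurable.ennreal_ofReal
  have hN0 : (0 : ℝ) < N := by exact_mod_cast hN
  have h2 : ∫⁻ g, (wordLength S g : ℝ≥0∞) ^ 2 ∂convPow μ N ≤ ENNReal.ofReal (N ^ 2 * B) := by
    calc ∫⁻ g, (wordLength S g : ℝ≥0∞) ^ 2 ∂convPow μ N
        ≤ N ^ 2 * ∫⁻ g, (wordLength S g : ℝ≥0∞) ^ 2 ∂μ :=
          lintegral_sq_convPow_le (wordLength_mul_le hSgen) hN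
      _ ≤ ENNReal.ofReal (N ^ 2) * ENNReal.ofReal B := by
          gcongr; rw [ENNReal.ofReal_pow hN0.le, ENNReal.ofReal_natCast]
      _ = ENNReal.ofReal (N ^ 2 * B) := (ENNReal.ofReal_mul (by positivity)).symm
  have := ofReal_sq_div_le_measure_of_lintegral_sq_le hX (by positivity) (Nat.cast_nonneg n)
    hnN (ofReal_natCast_mul_drift_le_lintegral h hN) h2
  convert this using 2
  · field_simp
  · ext g; simp

end Drift

section Adapted

variable {G : Type*} [Group G] [TopologicalSpace G] [IsTopologicalGroup G] [LocallyCompactSpace G]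
  [MeasurableSpace G] [BorelSpace G] {S : Set G} {μ : Measure G}

theorem CohomologicallyAdapted.memLp_wordLength (hμ : CohomologicallyAdapted S μ) {p : ℝ}
    (hp : 1 ≤ p) : MemLp (fun g => (wordLength S g : ℝ)) (ENNReal.ofReal p) μ := by
  have hmeas : AEStronglyMeasurable (fun g => (wordLength S g : ℝ)) μ := by
    simpa using (hμ.finiteMoments 1 le_rfl).aestronglyMeasurable
  rw [← integrable_norm_rpow_iff hmeas (by simp; linarith) ENNReal.ofReal_ne_top,
    ENNReal.toReal_ofReal (by linarith)]
  simpa using hμ.finiteMoments p hp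

theorem CohomologicallyAdapted.exists_lintegral_wordLength_sq_le
    (hμ : CohomologicallyAdapted S μ) :
    ∃ B : ℝ, 0 < B ∧ ∫⁻ g, (wordLength S g : ℝ≥0∞) ^ 2 ∂μ ≤ ENNReal.ofReal B := by
  have h := hμ.memLp_wordLength (p := 2) one_le_two
  rw [ENNReal.ofReal_ofNat] at h
  have hfin : ∫⁻ g, (wordLength S g : ℝ≥0∞) ^ 2 ∂μ ≠ ⊤ := by
    simpa [HasFiniteIntegral] using h.integrable_sq.hasFiniteIntegral.ne
  refine ⟨(∫⁻ g, (wordLength S g : ℝ≥0∞) ^ 2 ∂μ).toReal + 1, by positivity, ?_⟩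
  rw [ENNReal.ofReal_add ENNReal.toReal_nonneg zero_le_one, ENNReal.ofReal_toReal hfin]
  exact le_self_add

end Adapted

theorem compression_le_rpow_of_positive_drift_general
    {G : Type*} [Group G] [TopologicalSpace G] [IsTopologicalGroup G]
    [LocallyCompactSpace G] [SecondCountableTopology G]
    [MeasurableSpace G] [BorelSpace G]
    (S : Set G) (hScpt : IsCompact S)
    (hSgen : ∀ g : G, ∃ n : ℕ, g ∈ S ^ n)
    (μ : MeasureTheory.Measure G) (hμ : CohomologicallyAdapted S μ)
    (hdrift : 0 < sInf {x : ℝ | ∃ n : ℕ, 1 ≤ n ∧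
      x = (1 / (n : ℝ)) * ∫ g, (wordLength S g : ℝ) ∂(convPow μ n)})
    (q d : ℝ) (hq1 : 1 < q) (hd : 0 < d) :
    ∃ C : ℝ, 0 < C ∧
      ∀ (E : Type) [NormedAddCommGroup E] [NormedSpace ℝ E] [CompleteSpace E],
      (∃ J : E → StrongDual ℝ E, IsSmoothDualityMap q d J) →
      ∀ π : G →* (E ≃ₗᵢ[ℝ] E), (∀ x : E, Continuous fun g : G => π g x) →
      ∀ b : G → E, Continuous b → (∀ g h : G, b (g * h) = b g + π g (b h)) →
      (∫ g, b g ∂μ) = 0 →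
      ∀ n : ℕ, 1 ≤ n →
        sInf {r : ℝ | ∃ g : G, n ≤ wordLength S g ∧ r = ‖b g‖}
          ≤ C * (∫ g, ‖b g‖ ^ q ∂μ) ^ (1 / q) * (n : ℝ) ^ (1 / q) := by
  have := hμ.isProb
  change 0 < drift S μ at hdrift
  set ℓ := drift S μ
  obtain ⟨B, hB0, hB⟩ := hμ.exists_lintegral_wordLength_sq_le
  set c := ℓ ^ 2 / (16 * B)
  have hc : 0 < c := by positivity
  refine ⟨((2 / ℓ + 1) * d / c) ^ (1 / q), by positivity, ?_⟩
  rintro E _ _ _ ⟨J, hJ⟩ π - b hbc hb hb0 n hn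
  have hbLp {p : ℝ} (hp : 1 ≤ p) : MemLp b (ENNReal.ofReal p) μ :=
    memLp_cocycle hScpt hSgen hbc hb (hμ.memLp_wordLength hp)
  have hbq : Integrable (fun g => ‖b g‖ ^ q) μ := by
    simpa [ENNReal.toReal_ofReal (by linarith : 0 ≤ q)] using
      (hbLp hq1.le).integrable_norm_rpow (by simp; linarith) ENNReal.ofReal_ne_top
  obtain ⟨N, hN, hnN, hNn⟩ := exists_nat_two_mul_le_mul hdrift hn
  have hesc := ofReal_drift_sq_div_le_convPow_setOf_le_wordLength hSgen hdrift hB hN hnN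
  have hgrowth := lintegral_rpow_norm_cocycle_convPow_le hJ (by linarith) hd.le hbc hb
    (memLp_one_iff_integrable.mp (by simpa using hbLp le_rfl)) hb0 hbq N
  set I := ∫ g, ‖b g‖ ^ q ∂μ
  have hI : 0 ≤ I := integral_nonneg fun _ => by positivity
  calc sInf {r : ℝ | ∃ g : G, n ≤ wordLength S g ∧ r = ‖b g‖}
      = sInf ((‖b ·‖) '' {g | n ≤ wordLength S g}) := by congr 1; ext; simp [eq_comm]
    _ ≤ (N * (d * I) / c) ^ (1 / q) :=
        sInf_image_le_of_lintegral_rpow_le hbc.norm.measurable.aemeasurable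
          (fun _ => norm_nonneg _) (by linarith) hc (by positivity) hesc hgrowth
    _ ≤ ((2 / ℓ + 1) * n * (d * I) / c) ^ (1 / q) := by gcongr
    _ = ((2 / ℓ + 1) * d / c) ^ (1 / q) * I ^ (1 / q) * (n : ℝ) ^ (1 / q) := by
        rw [← Real.mul_rpow (by positivity) hI, ← Real.mul_rpow (by positivity) (by positivity)]
        congr 1
        ring

theorem compression_le_rpow_of_positive_drift
    {G : Type*} [Group G] [TopologicalSpace G] [IsTopologicalGroup G]
    [LocallyCompactSpace G] [SecondCountableTopology G]
    [MeasurableSpace G] [BorelSpace G]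
    (S : Set G) (hScpt : IsCompact S) (hSsymm : S⁻¹ = S)
    (hSgen : ∀ g : G, ∃ n : ℕ, g ∈ S ^ n)
    (hUni : (MeasureTheory.Measure.haar : MeasureTheory.Measure G).IsMulRightInvariant)
    (μ : MeasureTheory.Measure G) (hμ : CohomologicallyAdapted S μ)
    (hsupp : ∃ K : Set G, IsCompact K ∧ μ Kᶜ = 0)
    (hdrift : 0 < sInf {x : ℝ | ∃ n : ℕ, 1 ≤ n ∧
      x = (1 / (n : ℝ)) * ∫ g, (wordLength S g : ℝ) ∂(convPow μ n)})
    (q d : ℝ) (hq1 : 1 < q) (hq2 : q ≤ 2) (hd : 0 < d) :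
    ∃ C : ℝ, 0 < C ∧
      ∀ (E : Type) [NormedAddCommGroup E] [NormedSpace ℝ E] [CompleteSpace E],
      (∃ J : E → StrongDual ℝ E, IsSmoothDualityMap q d J) →
      ∀ π : G →* (E ≃ₗᵢ[ℝ] E), (∀ x : E, Continuous fun g : G => π g x) →
      ∀ b : G → E, Continuous b → (∀ g h : G, b (g * h) = b g + π g (b h)) →
      (∫ g, b g ∂μ) = 0 →
      ∀ n : ℕ, 1 ≤ n →
        sInf {r : ℝ | ∃ g : G, n ≤ wordLength S g ∧ r = ‖b g‖}
          ≤ C * (∫ g, ‖b g‖ ^ q ∂μ) ^ (1 / q) * (n : ℝ) ^ (1 / q) :=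
  compression_le_rpow_of_positive_drift_general S hScpt hSgen μ hμ hdrift q d hq1 hd
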